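/- Intertwining identity for the general urn particle system (kernel form of 𝒱Ĝ = G𝒱): Fix an integer c ≥ 1, a vector B ∈ ℕ^c with l := ∑_{u=1}^c B_u ≥ 1, a finitely supported probability vector p^l on the positive integers, and an arbitrary real-valued function h on the set of colorings of length l+b for all b ≥ 1. Then ∑_{b≥1} (p^l(b)/binom(l+b, b+1)) · ∑_{S ⊆ {1,…,l+b}, |S| = b+1} E_{V∼μ_B}[ h(σ(V,S)) ] = ∑_{u=1}^{c} (B_u/l) · ∑_{b≥1} p^l(b) · E_{W∼μ_{θ_{u,b}(B)}}[ h(W) ]. In words: one step of the particle kernel applied to a uniformly chosen coloring with count vector B, followed by evaluating h, has the same expectation as first performing one step of the urn transition from B and then evaluating the μ-average of h at the new count vector. -/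

import Mathlib

/-!
Fix `b` and `S ⊆ {1,…,l+b}` with `|S| = b + 1`. On the colorings `V ∈ C_B` with `V_{min S} = u`,
the map `V ↦ σ(V,S)` is a bijection onto the colorings in `C_{θ_{u,b}(B)}` that equal `u` on all
of `S`; its inverse reads off the positions outside `S ∖ {min S}`. Summing over `S` and `u`, each
`W ∈ C_{θ_{u,b}(B)}` is reached once for each of the `binom(B_u + b, b + 1)` subsets of its
`u`-positions, so
`∑_S ∑_{V ∈ C_B} H(σ(V,S)) = ∑_u binom(B_u + b, b + 1) ∑_{W ∈ C_{θ_{u,b}(B)}} H(W)`.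
With `H = 1` on a single colour class, together with `l · #{V ∈ C_B : V_j = u} = B_u · |C_B|`
for every position `j` (the positions are exchangeable), this gives
`l · binom(B_u + b, b + 1) · |C_{θ_{u,b}(B)}| = binom(l + b, b + 1) · B_u · |C_B|`, which converts
the normalisations of the two sides into each other. The identity therefore holds for every `b`
separately, and the finite support of `p` lets the sums over `b` and `u` be exchanged.
-/

open Finset

/-- The count vector of a coloring `V : {1,…,l} → {1,…,c}`:
`Φ(V)_u = #{i ≤ l : V_i = u}`. -/
def countVec {c l : ℕ} (V : Fin l → Fin c) : Fin c → ℕ :=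
  fun u => (Finset.univ.filter fun i => V i = u).card

/-- `C_B`: the finite set of colorings of length `l` with count vector `B`. -/
def colorings {c : ℕ} (l : ℕ) (B : Fin c → ℕ) : Finset (Fin l → Fin c) :=
  Finset.univ.filter fun V => countVec V = B

/-- Expectation of `f` under `μ_B`, the uniform probability measure on `C_B`. -/
noncomputable def unifExp {c : ℕ} (l : ℕ) (B : Fin c → ℕ)
    (f : (Fin l → Fin c) → ℝ) : ℝ :=
  (∑ V ∈ colorings l B, f V) / (colorings l B).card

/-- `θ_{u,b}(B)`: the vector obtained from `B` by adding `b` to its `u`-th coordinate. -/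
def theta {c : ℕ} (B : Fin c → ℕ) (u : Fin c) (b : ℕ) : Fin c → ℕ :=
  Function.update B u (B u + b)

/-- The rank of position `j` among the positions not in `S'`: `#{i ∉ S' : i < j}`. -/
def rankInCompl {m : ℕ} (S' : Finset (Fin m)) (j : Fin m) : ℕ :=
  ((S'ᶜ).filter fun i => i < j).card

/-- `σ^u_{S'}(V)`: the coloring of length `m` whose positions in `S'` all carry color
`u` and whose remaining positions carry, in increasing order of position, the colors
`V_1, …, V_l` (meaningful when `l = m - |S'|`). -/
def sigmaIns {c : ℕ} [NeZero c] {m l : ℕ} (u : Fin c) (S' : Finset (Fin m))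
    (V : Fin l → Fin c) : Fin m → Fin c := fun j =>
  if j ∈ S' then u
  else if h : rankInCompl S' j < l then V ⟨rankInCompl S' j, h⟩ else default

/-- `σ(V,S) := σ^u_{S∖{min S}}(V)` where `u = V_{min S}` (meaningful when `V` has
length `l`, `S ⊆ {1,…,l+b}` and `|S| = b+1`, in which case `min S ≤ l`). -/
def sigmaStep {c : ℕ} [NeZero c] {l m : ℕ} (V : Fin l → Fin c)
    (S : Finset (Fin m)) : Fin m → Fin c :=
  if hS : S.Nonempty then
    sigmaIns (if h : ((S.min' hS : Fin m) : ℕ) < l then V ⟨(S.min' hS : Fin m), h⟩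
              else default)
      (S.erase (S.min' hS)) V
  else fun _ => default

section Colorings

variable {c : ℕ}

lemma countVec_apply_eq_sum {n : ℕ} (W : Fin n → Fin c) (v : Fin c) :
    countVec W v = ∑ j, if W j = v then 1 else 0 :=
  card_filter _ _

lemma mem_colorings {n : ℕ} {B : Fin c → ℕ} {W : Fin n → Fin c} :
    W ∈ colorings n B ↔ countVec W = B := by
  simp [colorings]

lemma theta_apply_self (B : Fin c → ℕ) (u : Fin c) (b : ℕ) : theta B u b u = B u + b :=
  Function.update_self u _ B

lemma theta_apply_of_ne (B : Fin c → ℕ) {u v : Fin c} (b : ℕ) (h : v ≠ u) :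
    theta B u b v = B v :=
  Function.update_of_ne h _ B

lemma theta_left_inj {B B' : Fin c → ℕ} {u : Fin c} {b : ℕ} :
    theta B u b = theta B' u b ↔ B = B' := by
  refine ⟨fun h => funext fun v => ?_, fun h => h ▸ rfl⟩
  have hv := congrFun h v
  by_cases hvu : v = u
  · subst hvu; simpa [theta_apply_self] using hv
  · simpa [theta_apply_of_ne _ _ hvu] using hv

lemma sum_theta (B : Fin c → ℕ) (u : Fin c) (b : ℕ) : ∑ v, theta B u b v = ∑ v, B v + b := by
  rw [theta, sum_update_of_mem (mem_univ u), sdiff_singleton_eq_erase,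
    ← add_sum_erase univ B (mem_univ u)]
  ring

lemma colorings_nonempty {n : ℕ} {B : Fin c → ℕ} (hn : n = ∑ u, B u) :
    (colorings n B).Nonempty := by
  let e : Fin n ≃ Σ u, Fin (B u) :=
    (finCongr hn).trans (finSigmaFinEquiv (m := c) (n := B)).symm
  refine ⟨fun k => (e k).1, mem_colorings.2 (funext fun u => ?_)⟩
  rw [countVec_apply_eq_sum, e.sum_comp (fun x => if x.1 = u then 1 else 0), Fintype.sum_sigma]
  simp [apply_ite]

lemma countVec_comp_perm {n : ℕ} (W : Fin n → Fin c) (e : Equiv.Perm (Fin n)) :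
    countVec (W ∘ e) = countVec W :=
  funext fun v => by
    simpa only [countVec_apply_eq_sum, Function.comp_apply] using
      Equiv.sum_comp e fun j => if W j = v then 1 else 0

lemma card_filter_colorings_apply_eq {n : ℕ} (B : Fin c → ℕ) (j j' : Fin n) (u : Fin c) :
    #{V ∈ colorings n B | V j = u} = #{V ∈ colorings n B | V j' = u} := by
  have hmem : ∀ {i i' : Fin n} {V : Fin n → Fin c}, V ∈ {V ∈ colorings n B | V i = u} →
      V ∘ Equiv.swap i i' ∈ {V ∈ colorings n B | V i' = u} := by
    intro i i' V hV
    rw [mem_filter, mem_colorings] at hV ⊢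
    exact ⟨(countVec_comp_perm V _).trans hV.1, by simpa using hV.2⟩
  refine card_nbij' (· ∘ Equiv.swap j j') (· ∘ Equiv.swap j j') (fun V hV => hmem hV)
    (fun V hV => Equiv.swap_comm j j' ▸ hmem hV) (fun V _ => ?_) (fun V _ => ?_) <;>
  · funext k; simp

lemma card_mul_card_filter_colorings_apply {n : ℕ} (B : Fin c → ℕ) (j : Fin n) (u : Fin c) :
    n * #{V ∈ colorings n B | V j = u} = B u * #(colorings n B) :=
  calc n * #{V ∈ colorings n B | V j = u} = ∑ j', #{V ∈ colorings n B | V j' = u} := by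
        simp [card_filter_colorings_apply_eq B _ j]
    _ = ∑ V ∈ colorings n B, ∑ j', if V j' = u then 1 else 0 := by
        simp_rw [card_filter]; exact sum_comm
    _ = ∑ V ∈ colorings n B, B u :=
        sum_congr rfl fun V hV => by rw [← countVec_apply_eq_sum, mem_colorings.1 hV]
    _ = B u * #(colorings n B) := by rw [sum_const, smul_eq_mul, mul_comm]

end Colorings

section SigmaIns

variable {c m l : ℕ} [NeZero c] {S' : Finset (Fin m)}

lemma rankInCompl_orderEmbOfFin (hc : #S'ᶜ = l) (k : Fin l) :
    rankInCompl S' (S'ᶜ.orderEmbOfFin hc k) = k := by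
  have hfilter : (S'ᶜ).filter (· < S'ᶜ.orderEmbOfFin hc k)
      = (Iio k).map (S'ᶜ.orderEmbOfFin hc).toEmbedding := by
    ext j
    simp only [mem_filter, mem_map, mem_Iio, RelEmbedding.coe_toEmbedding]
    constructor
    · rintro ⟨hj, hjk⟩
      obtain ⟨i, rfl⟩ : j ∈ Set.range (S'ᶜ.orderEmbOfFin hc) := by
        rwa [range_orderEmbOfFin]
      exact ⟨i, (S'ᶜ.orderEmbOfFin hc).lt_iff_lt.1 hjk, rfl⟩
    · rintro ⟨i, hik, rfl⟩
      exact ⟨orderEmbOfFin_mem _ hc i, (S'ᶜ.orderEmbOfFin hc).lt_iff_lt.2 hik⟩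
  rw [rankInCompl, hfilter, card_map, Fin.card_Iio]

lemma sigmaIns_apply_of_mem (u : Fin c) (V : Fin l → Fin c) {j : Fin m} (hj : j ∈ S') :
    sigmaIns u S' V j = u := by
  simp [sigmaIns, hj]

lemma sigmaIns_orderEmbOfFin (hc : #S'ᶜ = l) (u : Fin c) (V : Fin l → Fin c) (k : Fin l) :
    sigmaIns u S' V (S'ᶜ.orderEmbOfFin hc k) = V k := by
  have hk : S'ᶜ.orderEmbOfFin hc k ∉ S' := mem_compl.1 (orderEmbOfFin_mem _ hc k)
  simp [sigmaIns, hk, rankInCompl_orderEmbOfFin hc k]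

lemma sigmaIns_injective (hc : #S'ᶜ = l) (u : Fin c) :
    Function.Injective (sigmaIns u S' : (Fin l → Fin c) → Fin m → Fin c) :=
  fun V V' h => funext fun k => by
    simpa only [sigmaIns_orderEmbOfFin hc] using congrFun h (S'ᶜ.orderEmbOfFin hc k)

lemma sigmaIns_restrict_compl (hc : #S'ᶜ = l) {u : Fin c} {W : Fin m → Fin c}
    (hW : ∀ j ∈ S', W j = u) :
    sigmaIns u S' (fun k => W (S'ᶜ.orderEmbOfFin hc k)) = W := by
  funext j
  by_cases hj : j ∈ S'
  · rw [sigmaIns_apply_of_mem u _ hj, hW j hj]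
  · obtain ⟨k, rfl⟩ : j ∈ Set.range (S'ᶜ.orderEmbOfFin hc) := by
      rw [range_orderEmbOfFin]; exact mem_compl.2 hj
    exact sigmaIns_orderEmbOfFin hc u _ k

lemma countVec_sigmaIns (hc : #S'ᶜ = l) (u : Fin c) (V : Fin l → Fin c) :
    countVec (sigmaIns u S' V) = theta (countVec V) u #S' := by
  funext v
  rw [countVec_apply_eq_sum, ← sum_add_sum_compl S', ← map_orderEmbOfFin_univ S'ᶜ hc, sum_map,
    sum_congr rfl fun j hj => by rw [sigmaIns_apply_of_mem u V hj]]
  simp only [RelEmbedding.coe_toEmbedding, sigmaIns_orderEmbOfFin, sum_const, smul_eq_mul,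
    ← countVec_apply_eq_sum]
  by_cases hv : v = u
  · subst hv; simp [theta_apply_self, add_comm]
  · simp [theta_apply_of_ne _ _ hv, Ne.symm hv]

end SigmaIns

section SigmaStep

variable {c : ℕ} [NeZero c]

/-- The colour `u = V_{min S}` in `σ(V,S) = σ^u_{S ∖ {min S}}(V)`. -/
def minColor {l m : ℕ} (V : Fin l → Fin c) (S : Finset (Fin m)) : Fin c :=
  if hS : S.Nonempty then
    (if h : ((S.min' hS : Fin m) : ℕ) < l then V ⟨(S.min' hS : Fin m), h⟩ else default)
  else default

lemma sigmaStep_eq_sigmaIns {l m : ℕ} (V : Fin l → Fin c) {S : Finset (Fin m)}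
    (hS : S.Nonempty) :
    sigmaStep V S = sigmaIns (minColor V S) (S.erase (S.min' hS)) V := by
  rw [sigmaStep, minColor, dif_pos hS, dif_pos hS]

lemma minColor_eq {l m : ℕ} (V : Fin l → Fin c) {S : Finset (Fin m)} (hS : S.Nonempty)
    (hlt : ((S.min' hS : Fin m) : ℕ) < l) : minColor V S = V ⟨S.min' hS, hlt⟩ := by
  rw [minColor, dif_pos hS, dif_pos hlt]

lemma rankInCompl_erase_min' {m : ℕ} {S : Finset (Fin m)} (hS : S.Nonempty) :
    rankInCompl (S.erase (S.min' hS)) (S.min' hS) = S.min' hS := by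
  have : ((S.erase (S.min' hS))ᶜ).filter (· < S.min' hS) = Iio (S.min' hS) := by
    ext i
    simp only [mem_filter, mem_compl, mem_erase, mem_Iio, and_iff_right_iff_imp]
    exact fun hi ⟨_, hiS⟩ => (S.min'_le i hiS).not_gt hi
  rw [rankInCompl, this, Fin.card_Iio]

lemma sigmaIns_erase_min'_apply_min' {l m : ℕ} {S : Finset (Fin m)} (hS : S.Nonempty)
    (hlt : ((S.min' hS : Fin m) : ℕ) < l) (u : Fin c) (V : Fin l → Fin c) :
    sigmaIns u (S.erase (S.min' hS)) V (S.min' hS) = V ⟨S.min' hS, hlt⟩ := by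
  simp [sigmaIns, rankInCompl_erase_min', hlt]

lemma min'_lt_of_card_eq {l b : ℕ} {S : Finset (Fin (l + b))} (hS : S.Nonempty)
    (hcard : #S = b + 1) : ((S.min' hS : Fin (l + b)) : ℕ) < l := by
  have : S ⊆ Ici (S.min' hS) := fun j hj => mem_Ici.2 (S.min'_le j hj)
  have := card_le_card this
  rw [Fin.card_Ici, hcard] at this
  have := (S.min' hS).isLt
  omega

lemma card_compl_erase_min' {l b : ℕ} {S : Finset (Fin (l + b))} (hS : S.Nonempty)
    (hcard : #S = b + 1) : #(S.erase (S.min' hS))ᶜ = l := by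
  rw [card_compl, card_erase_of_mem (S.min'_mem hS), hcard, Fintype.card_fin]
  omega

lemma sum_filter_minColor_sigmaStep {β : Type*} [AddCommMonoid β] {l b : ℕ} (B : Fin c → ℕ)
    {S : Finset (Fin (l + b))} (hcard : #S = b + 1) (u : Fin c)
    (H : (Fin (l + b) → Fin c) → β) :
    ∑ V ∈ colorings l B with minColor V S = u, H (sigmaStep V S)
      = ∑ W ∈ colorings (l + b) (theta B u b) with ∀ j ∈ S, W j = u, H W := by
  have hS : S.Nonempty := card_pos.1 (by omega)
  set S' := S.erase (S.min' hS)
  have hc : #S'ᶜ = l := card_compl_erase_min' hS hcard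
  have hS' : #S' = b := by rw [card_erase_of_mem (S.min'_mem hS), hcard]; rfl
  have hlt := min'_lt_of_card_eq hS hcard
  have hmem : ∀ V, sigmaIns u S' V ∈ {W ∈ colorings (l + b) (theta B u b) | ∀ j ∈ S, W j = u}
      ↔ V ∈ {V ∈ colorings l B | minColor V S = u} := by
    intro V
    have hblock : (∀ j ∈ S, sigmaIns u S' V j = u) ↔ V ⟨S.min' hS, hlt⟩ = u := by
      rw [← sigmaIns_erase_min'_apply_min' hS hlt u V]
      refine ⟨fun h => h _ (S.min'_mem hS), fun h j hj => ?_⟩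
      by_cases hjm : j = S.min' hS
      · exact hjm ▸ h
      · exact sigmaIns_apply_of_mem u V (mem_erase.2 ⟨hjm, hj⟩)
    simp only [mem_filter, mem_colorings, countVec_sigmaIns hc, hS', theta_left_inj,
      minColor_eq V hS hlt, hblock]
  rw [sum_congr rfl fun V hV => by rw [sigmaStep_eq_sigmaIns V hS, (mem_filter.1 hV).2]]
  refine sum_nbij (sigmaIns u S') (fun V hV => (hmem V).2 hV) (sigmaIns_injective hc u).injOn
    (fun W hW => ?_) fun _ _ => rfl
  have hWu : ∀ j ∈ S', W j = u := fun j hj => (mem_filter.1 hW).2 j (mem_of_mem_erase hj)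
  exact ⟨_, (hmem _).1 ((sigmaIns_restrict_compl hc hWu).symm ▸ hW),
    sigmaIns_restrict_compl hc hWu⟩

end SigmaStep

section Counting

variable {c l : ℕ} [NeZero c]

lemma sum_powersetCard_sum_filter_minColor_sigmaStep {β : Type*} [AddCommMonoid β]
    (B : Fin c → ℕ) (b : ℕ) (u : Fin c) (H : (Fin (l + b) → Fin c) → β) :
    ∑ S ∈ powersetCard (b + 1) univ, ∑ V ∈ colorings l B with minColor V S = u, H (sigmaStep V S)
      = (B u + b).choose (b + 1) • ∑ W ∈ colorings (l + b) (theta B u b), H W := by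
  rw [sum_congr rfl fun S hS => sum_filter_minColor_sigmaStep B (mem_powersetCard_univ.1 hS) u H,
    sum_comm' (t' := colorings (l + b) (theta B u b))
      (s' := fun W => powersetCard (b + 1) {j | W j = u}), smul_sum]
  · refine sum_congr rfl fun W hW => ?_
    have hfiber : #{j | W j = u} = B u + b := by
      rw [← theta_apply_self B u b, ← mem_colorings.1 hW, countVec]
    rw [sum_const, card_powersetCard, hfiber]
  · intro S W
    simp only [mem_filter, mem_powersetCard, mem_univ, true_and, subset_iff]
    tauto

lemma sum_powersetCard_sum_sigmaStep {β : Type*} [AddCommMonoid β] (B : Fin c → ℕ) (b : ℕ)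
    (H : (Fin (l + b) → Fin c) → β) :
    ∑ S ∈ powersetCard (b + 1) univ, ∑ V ∈ colorings l B, H (sigmaStep V S)
      = ∑ u, (B u + b).choose (b + 1) • ∑ W ∈ colorings (l + b) (theta B u b), H W :=
  calc _ = ∑ S ∈ powersetCard (b + 1) univ, ∑ u,
        ∑ V ∈ colorings l B with minColor V S = u, H (sigmaStep V S) :=
        sum_congr rfl fun S _ => (sum_fiberwise _ _ _).symm
    _ = _ := by
        rw [sum_comm]
        exact sum_congr rfl fun u _ => sum_powersetCard_sum_filter_minColor_sigmaStep B b u H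

lemma card_mul_choose_mul_card_colorings_theta (B : Fin c → ℕ) (b : ℕ) (u : Fin c) :
    l * ((B u + b).choose (b + 1) * #(colorings (l + b) (theta B u b)))
      = (l + b).choose (b + 1) * (B u * #(colorings l B)) := by
  have hcount := sum_powersetCard_sum_filter_minColor_sigmaStep (l := l) B b u fun _ => (1 : ℕ)
  simp only [sum_const, smul_eq_mul, mul_one] at hcount
  rw [← hcount, mul_sum, sum_congr rfl (g := fun _ => B u * #(colorings l B)), sum_const,
    card_powersetCard, card_univ, Fintype.card_fin, smul_eq_mul]
  intro S hS
  have hcard := mem_powersetCard_univ.1 hS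
  have hS : S.Nonempty := card_pos.1 (by omega)
  have hlt := min'_lt_of_card_eq hS hcard
  rw [filter_congr fun V _ => by rw [minColor_eq V hS hlt]]
  exact card_mul_card_filter_colorings_apply B _ u

lemma sum_unifExp_sigmaStep_div_choose (B : Fin c → ℕ) (hl : l = ∑ u, B u) (hl1 : 1 ≤ l)
    (b : ℕ) (F : (Fin (l + b) → Fin c) → ℝ) :
    (∑ S ∈ powersetCard (b + 1) univ, unifExp l B fun V => F (sigmaStep V S))
        / ((l + b).choose (b + 1) : ℕ)
      = ∑ u, ((B u : ℝ) / l) * unifExp (l + b) (theta B u b) F := by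
  have hN : (#(colorings l B) : ℝ) ≠ 0 := by
    exact_mod_cast (colorings_nonempty hl).card_pos.ne'
  have hK : (((l + b).choose (b + 1) : ℕ) : ℝ) ≠ 0 := by
    exact_mod_cast (Nat.choose_pos (by omega)).ne'
  have hl0 : (l : ℝ) ≠ 0 := by exact_mod_cast (by omega : l ≠ 0)
  simp only [unifExp]
  rw [← sum_div, sum_powersetCard_sum_sigmaStep, sum_div, sum_div]
  refine sum_congr rfl fun u _ => ?_
  have hNu : (#(colorings (l + b) (theta B u b)) : ℝ) ≠ 0 := by
    exact_mod_cast (colorings_nonempty (by rw [sum_theta, hl])).card_pos.ne'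
  have hcard : (l : ℝ) * ((B u + b).choose (b + 1) * #(colorings (l + b) (theta B u b)))
      = (l + b).choose (b + 1) * (B u * #(colorings l B)) := by
    exact_mod_cast card_mul_choose_mul_card_colorings_theta B b u
  rw [nsmul_eq_mul]
  field_simp
  linear_combination (∑ W ∈ colorings (l + b) (theta B u b), F W) * hcard

end Counting

theorem intertwining_identity_general {c : ℕ} [NeZero c] (B : Fin c → ℕ)
    (l : ℕ) (hl : l = ∑ u, B u) (hl1 : 1 ≤ l)
    (p : ℕ → ℝ) (hpfin : (Function.support p).Finite)
    (h : (m : ℕ) → (Fin m → Fin c) → ℝ) :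
    ∑' b : ℕ, (p b / ((l + b).choose (b + 1) : ℕ)) *
        ∑ S ∈ (Finset.univ : Finset (Fin (l + b))).powersetCard (b + 1),
          unifExp l B (fun V => h (l + b) (sigmaStep V S))
      = ∑ u : Fin c, ((B u : ℝ) / l) *
          ∑' b : ℕ, p b * unifExp (l + b) (theta B u b) (h (l + b)) := by
  have hsummable : ∀ u ∈ univ, Summable fun b =>
      (B u : ℝ) / l * (p b * unifExp (l + b) (theta B u b) (h (l + b))) := fun u _ =>
    summable_of_hasFiniteSupport <| hpfin.subset fun b hb =>
      Function.support_mul_subset_left _ _ (Function.support_mul_subset_right _ _ hb)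
  calc _ = ∑' b, ∑ u, (B u : ℝ) / l * (p b * unifExp (l + b) (theta B u b) (h (l + b))) :=
        tsum_congr fun b => by
          rw [div_mul_eq_mul_div, mul_div_assoc, sum_unifExp_sigmaStep_div_choose B hl hl1, mul_sum]
          exact sum_congr rfl fun u _ => by ring
    _ = _ := by
        rw [Summable.tsum_finsetSum hsummable]
        exact sum_congr rfl fun u _ => tsum_mul_left

/-- Intertwining identity for the general urn particle system (kernel form of
`𝒱Ĝ = G𝒱`): for `B ∈ ℕ^c` with `l = ∑_u B_u ≥ 1`, a finitely supported probability
vector `p` on the positive integers, and any function `h` on colorings of length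
`l + b` for all `b ≥ 1`,
`∑_{b≥1} (p(b)/binom(l+b,b+1)) ∑_{S ⊆ [l+b], |S|=b+1} E_{V∼μ_B}[h(σ(V,S))]
  = ∑_{u=1}^{c} (B_u/l) ∑_{b≥1} p(b) E_{W∼μ_{θ_{u,b}(B)}}[h(W)]`. -/
theorem intertwining_identity {c : ℕ} [NeZero c] (B : Fin c → ℕ)
    (l : ℕ) (hl : l = ∑ u, B u) (hl1 : 1 ≤ l)
    (p : ℕ → ℝ) (hp0 : p 0 = 0) (hpnn : ∀ b, 0 ≤ p b)
    (hpfin : (Function.support p).Finite) (hpsum : ∑' b, p b = 1)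
    (h : (m : ℕ) → (Fin m → Fin c) → ℝ) :
    ∑' b : ℕ, (p b / ((l + b).choose (b + 1) : ℕ)) *
        ∑ S ∈ (Finset.univ : Finset (Fin (l + b))).powersetCard (b + 1),
          unifExp l B (fun V => h (l + b) (sigmaStep V S))
      = ∑ u : Fin c, ((B u : ℝ) / l) *
          ∑' b : ℕ, p b * unifExp (l + b) (theta B u b) (h (l + b)) :=
  intertwining_identity_general B l hl hl1 p hpfin h
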